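/- Let μ ∈ (−2,2), let k = 0 or k = 1, and let K be a compact subset of ℝ. Then there exist a constant C and an integer N such that for all n ≥ N, sup_{x∈K} |ψ_{n−k}⁽ⁿ⁾(μ + x/n)| ≤ C. -/

import Mathlib

/-!
With `φ_m(t) = e^{-t²/2} H_m(t)`, Hermite's equation reads `φ_m'' = (t² - (2m+1)) φ_m`, so the
energy `E(t) = φ_m'(t)² + (2m+1-t²) φ_m(t)²` satisfies `E' = -2t φ_m²` and is largest at `t = 0`.
Hence `(2m+1-t²) φ_m(t)² ≤ E(0)`, and the values of `H_m` and `H_m'` at `0` together with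
`binom(2j,j)² (2j+1) ≤ 16^j` give `E(0)² ≤ 4(m+1)(2^m m!)²`. Since
`ψ_m⁽ⁿ⁾(y)⁴ = (n/2) φ_m(t)⁴ / ((2^m m!)² π)` with `t = √(n/2) y`, this yields
`ψ⁴ ≤ 2n(m+1) / (π (2m+1-t²)²)`, which is bounded in the bulk: there `m ≥ n-1` and
`t² = n (μ + x/n)² / 2` stays below `2m+1` by a fixed multiple of `n`.
-/

open Filter

noncomputable section

/-- The physicists' Hermite polynomial `H_k(x) = e^{x²} (-d/dx)^k e^{-x²}`. -/
def hermiteH (k : ℕ) (x : ℝ) : ℝ :=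
  Real.exp (x ^ 2) * ((-1 : ℝ) ^ k * iteratedDeriv k (fun t => Real.exp (-t ^ 2)) x)

/-- The oscillator wave functions. -/
def psiGUE (n k : ℕ) (x : ℝ) : ℝ :=
  ((n : ℝ) / 2) ^ ((1 : ℝ) / 4) * Real.exp (-(n : ℝ) * x ^ 2 / 4) /
      Real.sqrt (2 ^ k * (Nat.factorial k : ℝ) * Real.sqrt Real.pi) *
    hermiteH k (Real.sqrt ((n : ℝ) / 2) * x)

open Polynomial
open scoped Nat Topology

def physHermite : ℕ → ℝ[X]
  | 0 => 1
  | m + 1 => 2 * X * physHermite m - derivative (physHermite m)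

lemma physHermite_succ (m : ℕ) :
    physHermite (m + 1) = 2 * X * physHermite m - derivative (physHermite m) := rfl

lemma derivative_physHermite_succ (m : ℕ) :
    derivative (physHermite (m + 1)) = 2 * (m + 1) * physHermite m := by
  induction m with
  | zero => simp [physHermite, derivative_mul]
  | succ m ih =>
    rw [physHermite_succ (m + 1), derivative_sub, derivative_mul, ih, derivative_mul,
      physHermite_succ m]
    simp only [derivative_mul, derivative_add, derivative_ofNat, derivative_natCast,
      derivative_one, derivative_X]
    push_cast
    ring

lemma derivative_derivative_physHermite (m : ℕ) :
    derivative (derivative (physHermite m)) =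
      2 * X * derivative (physHermite m) - 2 * (m : ℝ[X]) * physHermite m := by
  cases m with
  | zero => simp [physHermite]
  | succ m =>
    rw [derivative_physHermite_succ, physHermite_succ]
    simp only [derivative_mul, derivative_add, derivative_ofNat, derivative_natCast,
      derivative_one]
    push_cast
    ring

lemma eval_zero_derivative_physHermite_succ (m : ℕ) :
    (derivative (physHermite (m + 1))).eval 0 = 2 * (m + 1) * (physHermite m).eval 0 := by
  simp [derivative_physHermite_succ]

lemma eval_zero_physHermite_add_two (m : ℕ) :
    (physHermite (m + 2)).eval 0 = -(2 * (m + 1)) * (physHermite m).eval 0 := by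
  rw [physHermite_succ, eval_sub, eval_zero_derivative_physHermite_succ]
  simp

lemma eval_zero_physHermite_two_mul_add_one (j : ℕ) : (physHermite (2 * j + 1)).eval 0 = 0 := by
  induction j with
  | zero => simp [physHermite]
  | succ j ih =>
    rw [show 2 * (j + 1) + 1 = 2 * j + 1 + 2 by ring, eval_zero_physHermite_add_two, ih, mul_zero]

lemma eval_zero_physHermite_two_mul_sq (j : ℕ) :
    (physHermite (2 * j)).eval 0 ^ 2 = (2 * j)! * j.centralBinom := by
  induction j with
  | zero => simp [physHermite]
  | succ j ih =>
    have hC : ((j + 1 : ℕ) : ℝ) * (j + 1).centralBinom = 2 * (2 * j + 1) * j.centralBinom := by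
      exact_mod_cast Nat.succ_mul_centralBinom_succ j
    rw [show 2 * (j + 1) = 2 * j + 1 + 1 by ring, Nat.factorial_succ, Nat.factorial_succ,
      eval_zero_physHermite_add_two, mul_pow, ih]
    push_cast at hC ⊢
    linear_combination (-(2 * (2 * (j : ℝ) + 1)) * ((2 * j)! : ℝ)) * hC

lemma hasDerivAt_exp_neg_mul_sq_mul_eval (a : ℝ) (p : ℝ[X]) (t : ℝ) :
    HasDerivAt (fun t => Real.exp (-a * t ^ 2) * p.eval t)
      (Real.exp (-a * t ^ 2) * ((derivative p).eval t - 2 * a * t * p.eval t)) t := by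
  have hexp := ((hasDerivAt_pow 2 t).const_mul (-a)).exp
  exact (hexp.mul (p.hasDerivAt t)).congr_deriv (by push_cast; ring)

lemma iteratedDeriv_exp_neg_sq (k : ℕ) :
    iteratedDeriv k (fun t => Real.exp (-t ^ 2)) =
      fun x => (-1) ^ k * (Real.exp (-x ^ 2) * (physHermite k).eval x) := by
  induction k with
  | zero => funext x; simp [physHermite]
  | succ k ih =>
    funext x
    have h := (hasDerivAt_exp_neg_mul_sq_mul_eval 1 (physHermite k) x).const_mul ((-1) ^ k)
    simp only [neg_one_mul] at h
    rw [iteratedDeriv_succ, ih, h.deriv, physHermite_succ]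
    simp only [eval_sub, eval_mul, eval_X, eval_ofNat]
    ring

lemma hermiteH_eq_eval (k : ℕ) (x : ℝ) : hermiteH k x = (physHermite k).eval x := by
  rw [hermiteH, iteratedDeriv_exp_neg_sq]
  calc Real.exp (x ^ 2) * ((-1) ^ k * ((-1) ^ k * (Real.exp (-x ^ 2) * (physHermite k).eval x)))
      = Real.exp (x ^ 2 + -x ^ 2) * ((-1) * (-1)) ^ k * (physHermite k).eval x := by
        rw [Real.exp_add, mul_pow]; ring
    _ = (physHermite k).eval x := by simp

def hermiteFun (m : ℕ) (t : ℝ) : ℝ := Real.exp (-t ^ 2 / 2) * (physHermite m).eval t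

def hermiteFunDeriv (m : ℕ) (t : ℝ) : ℝ :=
  Real.exp (-t ^ 2 / 2) * ((derivative (physHermite m)).eval t - t * (physHermite m).eval t)

lemma hasDerivAt_exp_neg_sq_div_two_mul_eval (p : ℝ[X]) (t : ℝ) :
    HasDerivAt (fun t => Real.exp (-t ^ 2 / 2) * p.eval t)
      (Real.exp (-t ^ 2 / 2) * ((derivative p).eval t - t * p.eval t)) t := by
  convert hasDerivAt_exp_neg_mul_sq_mul_eval (1 / 2) p t using 1
  · ext; ring_nf
  · ring_nf

lemma hasDerivAt_hermiteFun (m : ℕ) (t : ℝ) :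
    HasDerivAt (hermiteFun m) (hermiteFunDeriv m t) t :=
  hasDerivAt_exp_neg_sq_div_two_mul_eval _ t

lemma hasDerivAt_hermiteFunDeriv (m : ℕ) (t : ℝ) :
    HasDerivAt (hermiteFunDeriv m) ((t ^ 2 - (2 * m + 1)) * hermiteFun m t) t := by
  convert hasDerivAt_exp_neg_sq_div_two_mul_eval
    (derivative (physHermite m) - X * physHermite m) t using 1
  · ext s; simp [hermiteFunDeriv]
  · have hode := congrArg (eval t) (derivative_derivative_physHermite m)
    simp only [eval_sub, eval_mul, eval_X, eval_ofNat, eval_natCast] at hode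
    simp only [hermiteFun, derivative_sub, derivative_mul, derivative_X, eval_sub, eval_add,
      eval_mul, eval_X, eval_one, hode]
    ring

def hermiteEnergy (m : ℕ) (t : ℝ) : ℝ :=
  hermiteFunDeriv m t ^ 2 + (2 * m + 1 - t ^ 2) * hermiteFun m t ^ 2

lemma hasDerivAt_hermiteEnergy (m : ℕ) (t : ℝ) :
    HasDerivAt (hermiteEnergy m) (-2 * t * hermiteFun m t ^ 2) t := by
  have h := ((hasDerivAt_hermiteFunDeriv m t).pow 2).add
    (((hasDerivAt_pow 2 t).const_sub (2 * m + 1 : ℝ)).mul ((hasDerivAt_hermiteFun m t).pow 2))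
  exact h.congr_deriv (by simp only [Pi.pow_apply]; push_cast; ring)

lemma le_apply_zero_of_mul_deriv_nonpos {f f' : ℝ → ℝ} (hf : ∀ t, HasDerivAt f (f' t) t)
    (hf' : ∀ t, t * f' t ≤ 0) (t : ℝ) : f t ≤ f 0 := by
  have hcont : ∀ s : Set ℝ, ContinuousOn f s := fun s x _ =>
    (hf x).continuousAt.continuousWithinAt
  have hderiv : ∀ s : Set ℝ, ∀ x ∈ s, HasDerivWithinAt f (f' x) s x := fun s x _ =>
    (hf x).hasDerivWithinAt
  rcases le_total 0 t with ht | ht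
  · refine antitoneOn_of_hasDerivWithinAt_nonpos (convex_Ici 0) (hcont _) (hderiv _) ?_
      Set.self_mem_Ici ht ht
    intro x hx
    rw [interior_Ici] at hx
    exact nonpos_of_mul_nonpos_right (hf' x) hx
  · refine monotoneOn_of_hasDerivWithinAt_nonneg (convex_Iic 0) (hcont _) (hderiv _) ?_
      ht Set.self_mem_Iic ht
    intro x hx
    rw [interior_Iic] at hx
    exact nonneg_of_mul_nonpos_right (hf' x) hx

lemma mul_hermiteFun_sq_le (m : ℕ) (t : ℝ) :
    (2 * m + 1 - t ^ 2) * hermiteFun m t ^ 2 ≤ hermiteEnergy m 0 := by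
  have hE := le_apply_zero_of_mul_deriv_nonpos (hasDerivAt_hermiteEnergy m)
    (fun s => by nlinarith [sq_nonneg (s * hermiteFun m s)]) t
  have hD := sq_nonneg (hermiteFunDeriv m t)
  unfold hermiteEnergy at hE ⊢
  linarith

lemma Nat.centralBinom_sq_mul_le (j : ℕ) : j.centralBinom ^ 2 * (2 * j + 1) ≤ 16 ^ j := by
  induction j with
  | zero => simp
  | succ j ih =>
    have hrec := Nat.succ_mul_centralBinom_succ j
    have key :
        ((j + 1) * (j + 1).centralBinom) ^ 2 * (2 * (j + 1) + 1) ≤ (j + 1) ^ 2 * 16 ^ (j + 1) :=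
      calc ((j + 1) * (j + 1).centralBinom) ^ 2 * (2 * (j + 1) + 1)
          = 4 * (2 * j + 1) * (2 * j + 3) * (j.centralBinom ^ 2 * (2 * j + 1)) := by
            rw [hrec]; ring
        _ ≤ 4 * (2 * j + 1) * (2 * j + 3) * 16 ^ j := by gcongr
        _ ≤ 16 * (j + 1) ^ 2 * 16 ^ j := Nat.mul_le_mul_right _ (by nlinarith)
        _ = (j + 1) ^ 2 * 16 ^ (j + 1) := by ring
    rw [mul_pow, mul_assoc] at key
    exact Nat.le_of_mul_le_mul_left key (by positivity)

lemma hermiteEnergy_zero (m : ℕ) :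
    hermiteEnergy m 0 =
      (derivative (physHermite m)).eval 0 ^ 2 + (2 * m + 1) * (physHermite m).eval 0 ^ 2 := by
  simp [hermiteEnergy, hermiteFunDeriv, hermiteFun]

lemma hermiteEnergy_zero_two_mul (j : ℕ) :
    hermiteEnergy (2 * j) 0 = (4 * j + 1) * (2 * j)! * j.centralBinom := by
  rw [hermiteEnergy_zero, eval_zero_physHermite_two_mul_sq]
  rcases j with _ | j
  · simp [physHermite]
  · rw [show 2 * (j + 1) = 2 * j + 1 + 1 by ring, eval_zero_derivative_physHermite_succ,
      eval_zero_physHermite_two_mul_add_one]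
    push_cast; ring

lemma hermiteEnergy_zero_two_mul_add_one (j : ℕ) :
    hermiteEnergy (2 * j + 1) 0 = 4 * (2 * j + 1) ^ 2 * (2 * j)! * j.centralBinom := by
  rw [hermiteEnergy_zero, eval_zero_derivative_physHermite_succ,
    eval_zero_physHermite_two_mul_add_one, mul_pow, eval_zero_physHermite_two_mul_sq]
  push_cast; ring

lemma hermiteEnergy_zero_sq_le (m : ℕ) :
    hermiteEnergy m 0 ^ 2 ≤ 4 * (m + 1) * (2 ^ m * m !) ^ 2 := by
  have hC (j : ℕ) : (j.centralBinom : ℝ) ^ 2 * (2 * j + 1) ≤ 16 ^ j := by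
    exact_mod_cast Nat.centralBinom_sq_mul_le j
  have h16 (j : ℕ) : (16 : ℝ) ^ j = (2 ^ j) ^ 4 := by
    rw [← pow_mul, mul_comm, pow_mul]; norm_num
  obtain ⟨j, rfl | rfl⟩ := Nat.even_or_odd' m
  · calc hermiteEnergy (2 * j) 0 ^ 2
        = (4 * j + 1) ^ 2 * ((2 * j)! : ℝ) ^ 2 * (j.centralBinom : ℝ) ^ 2 := by
          rw [hermiteEnergy_zero_two_mul]; ring
      _ ≤ 4 * (2 * j + 1) ^ 2 * ((2 * j)! : ℝ) ^ 2 * (j.centralBinom : ℝ) ^ 2 := by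
          gcongr; nlinarith [(j.cast_nonneg : (0 : ℝ) ≤ j)]
      _ = 4 * (2 * j + 1) * ((2 * j)! : ℝ) ^ 2 * ((j.centralBinom : ℝ) ^ 2 * (2 * j + 1)) := by
          ring
      _ ≤ 4 * (2 * j + 1) * ((2 * j)! : ℝ) ^ 2 * 16 ^ j := by gcongr; exact hC j
      _ = 4 * ((2 * j : ℕ) + 1) * (2 ^ (2 * j) * ((2 * j)! : ℝ)) ^ 2 := by
          rw [h16]; push_cast; ring
  · calc hermiteEnergy (2 * j + 1) 0 ^ 2
        = 16 * (2 * j + 1) ^ 2 * ((2 * j)! : ℝ) ^ 2 *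
            ((2 * j + 1) ^ 2 * (j.centralBinom : ℝ) ^ 2) := by
          rw [hermiteEnergy_zero_two_mul_add_one]; ring
      _ ≤ 16 * (2 * j + 1) ^ 2 * ((2 * j)! : ℝ) ^ 2 *
            ((2 * j + 2) * (2 * j + 1) * (j.centralBinom : ℝ) ^ 2) := by
          gcongr; nlinarith
      _ = 16 * (2 * j + 1) ^ 2 * ((2 * j)! : ℝ) ^ 2 * (2 * j + 2) *
            ((j.centralBinom : ℝ) ^ 2 * (2 * j + 1)) := by ring
      _ ≤ 16 * (2 * j + 1) ^ 2 * ((2 * j)! : ℝ) ^ 2 * (2 * j + 2) * 16 ^ j := by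
          gcongr; exact hC j
      _ = 4 * ((2 * j + 1 : ℕ) + 1) * (2 ^ (2 * j + 1) * ((2 * j + 1)! : ℝ)) ^ 2 := by
          rw [h16, Nat.factorial_succ]; push_cast; ring

lemma rpow_one_div_four_pow_four {x : ℝ} (hx : 0 ≤ x) : (x ^ (1 / 4 : ℝ)) ^ 4 = x := by
  rw [← Real.rpow_natCast, ← Real.rpow_mul hx]; norm_num

lemma psiGUE_eq (n m : ℕ) (y : ℝ) :
    psiGUE n m y = ((n : ℝ) / 2) ^ (1 / 4 : ℝ) * hermiteFun m (√((n : ℝ) / 2) * y) /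
      √(2 ^ m * m ! * √Real.pi) := by
  have hs : √((n : ℝ) / 2) ^ 2 = n / 2 := Real.sq_sqrt (by positivity)
  rw [psiGUE, hermiteH_eq_eval, hermiteFun, mul_pow, hs]
  ring_nf

lemma psiGUE_pow_four (n m : ℕ) (y : ℝ) :
    psiGUE n m y ^ 4 =
      n / 2 * hermiteFun m (√((n : ℝ) / 2) * y) ^ 4 / ((2 ^ m * m !) ^ 2 * Real.pi) := by
  have hF : √(2 ^ m * m ! * √Real.pi) ^ 4 = (2 ^ m * m !) ^ 2 * Real.pi := by
    rw [show 4 = 2 * 2 by rfl, pow_mul, Real.sq_sqrt (by positivity), mul_pow,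
      Real.sq_sqrt Real.pi_pos.le]
  rw [psiGUE_eq, div_pow, mul_pow, rpow_one_div_four_pow_four (by positivity), hF]

lemma psiGUE_pow_four_le {n m : ℕ} {y c : ℝ} (hn : 0 < n) (hmn : m ≤ n) (hc : 0 < c)
    (hgap : c * n ≤ 2 * m + 1 - n * y ^ 2 / 2) :
    psiGUE n m y ^ 4 ≤ 4 / (Real.pi * c ^ 2) := by
  rw [psiGUE_pow_four]
  set t := √((n : ℝ) / 2) * y
  set F : ℝ := 2 ^ m * (m ! : ℝ)
  have ht : t ^ 2 = n * y ^ 2 / 2 := by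
    rw [mul_pow, Real.sq_sqrt (by positivity)]; ring
  have hn1 : (1 : ℝ) ≤ n := by exact_mod_cast hn
  have hmn' : (m : ℝ) ≤ n := by exact_mod_cast hmn
  have hF : 0 < F := by positivity
  have hg : c * n ≤ 2 * m + 1 - t ^ 2 := by rw [ht]; exact hgap
  have hg0 : 0 ≤ 2 * m + 1 - t ^ 2 := (by positivity : 0 ≤ c * n).trans hg
  have hφ : ((2 * m + 1 - t ^ 2) * hermiteFun m t ^ 2) ^ 2 ≤ 4 * (m + 1) * F ^ 2 :=
    (pow_le_pow_left₀ (by positivity) (mul_hermiteFun_sq_le m t) 2).trans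
      (hermiteEnergy_zero_sq_le m)
  rw [le_div_iff₀ (by positivity)]
  refine le_of_mul_le_mul_right ?_ (by positivity : (0 : ℝ) < n ^ 2)
  calc n / 2 * hermiteFun m t ^ 4 / (F ^ 2 * Real.pi) * (Real.pi * c ^ 2) * n ^ 2
      = n / 2 * hermiteFun m t ^ 4 * (c * n) ^ 2 / F ^ 2 := by field_simp
    _ ≤ n / 2 * hermiteFun m t ^ 4 * (2 * m + 1 - t ^ 2) ^ 2 / F ^ 2 := by gcongr
    _ = n / 2 * ((2 * m + 1 - t ^ 2) * hermiteFun m t ^ 2) ^ 2 / F ^ 2 := by ring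
    _ ≤ n / 2 * (4 * (m + 1) * F ^ 2) / F ^ 2 := by gcongr
    _ = 2 * n * (m + 1) := by field_simp; ring
    _ ≤ 4 * n ^ 2 := by nlinarith

lemma IsCompact.eventually_forall_add_div_mem {K : Set ℝ} (hK : IsCompact K) {μ : ℝ}
    {U : Set ℝ} (hU : U ∈ 𝓝 μ) : ∀ᶠ n : ℕ in atTop, ∀ x ∈ K, μ + x / n ∈ U := by
  have hsmall : ∀ᶠ s in 𝓝 (0 : ℝ), ∀ x ∈ K, μ + s * x ∈ U := by
    refine hK.eventually_forall_of_forall_eventually fun x _ => ?_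
    have hcont : Continuous fun z : ℝ × ℝ => μ + z.1 * z.2 := by fun_prop
    simpa using (hcont.tendsto (0, x)).eventually_mem (by simpa using hU)
  filter_upwards [(tendsto_inv_atTop_zero.comp tendsto_natCast_atTop_atTop).eventually hsmall]
    with n hn x hx
  simpa [div_eq_inv_mul] using hn x hx

lemma abs_le_rpow_one_div_four_of_pow_four_le {x b : ℝ} (h : x ^ 4 ≤ b) :
    |x| ≤ b ^ (1 / 4 : ℝ) := by
  have hb : 0 ≤ b := (by positivity : 0 ≤ x ^ 4).trans h
  rw [← pow_le_pow_iff_left₀ (abs_nonneg x) (by positivity) four_ne_zero, pow_abs,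
    rpow_one_div_four_pow_four hb, abs_of_nonneg (by positivity)]
  exact h

/-- Bound on the oscillator wave functions in the bulk of the spectrum:
for `μ ∈ (-2,2)`, `k ∈ {0,1}` and `K ⊆ ℝ` compact, `|ψ_{n-k}⁽ⁿ⁾(μ + x/n)| ≤ C`
uniformly in `x ∈ K` for `n` large. -/
theorem psi_bulk_bound (μ : ℝ) (hμ : μ ∈ Set.Ioo (-2 : ℝ) 2)
    (k : ℕ) (hk : k = 0 ∨ k = 1) (K : Set ℝ) (hK : IsCompact K) :
    ∃ C : ℝ, ∃ N : ℕ, ∀ n ≥ N, ∀ x ∈ K, |psiGUE n (n - k) (μ + x / n)| ≤ C := by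
  set c := (4 - μ ^ 2) / 8 with hc_def
  have hc : 0 < c := div_pos (by nlinarith [hμ.1, hμ.2]) (by norm_num)
  have hbulk : ∀ᶠ n : ℕ in atTop, ∀ x ∈ K, (μ + x / n) ^ 2 < μ ^ 2 + 4 * c :=
    hK.eventually_forall_add_div_mem <|
      (isOpen_lt (continuous_pow 2) continuous_const).mem_nhds (by simpa using hc)
  have hlarge : ∀ᶠ n : ℕ in atTop, 1 ≤ c * n :=
    (tendsto_natCast_atTop_atTop.const_mul_atTop hc).eventually_ge_atTop 1
  obtain ⟨N, hN⟩ := eventually_atTop.1 ((hbulk.and hlarge).and (eventually_gt_atTop 0))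
  refine ⟨(4 / (Real.pi * c ^ 2)) ^ (1 / 4 : ℝ), N, fun n hn x hx => ?_⟩
  obtain ⟨⟨hy, hcn⟩, hn0⟩ := hN n hn
  have hm : (n : ℝ) ≤ (n - k : ℕ) + 1 := by exact_mod_cast (by omega : n ≤ n - k + 1)
  refine abs_le_rpow_one_div_four_of_pow_four_le <|
    psiGUE_pow_four_le hn0 (Nat.sub_le n k) hc ?_
  have hny := mul_le_mul_of_nonneg_left (hy x hx).le (Nat.cast_nonneg (α := ℝ) n)
  have hμc : (n : ℝ) * (μ ^ 2 + 4 * c) = 4 * n - 4 * (c * n) := by rw [hc_def]; ring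
  linarith
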